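/- arXiv:2410.05994 — 3 statements merged into one kernel-verified Lean document; each statement's English description precedes it below -/
import Mathlib

section
/- Let A be a commutative ring and ξ ∈ A. The quotient ring R = A[u,v]/(uv - ξ) is free as an A-module with basis {1} ∪ {u^i : i ≥ 1} ∪ {v^j : j ≥ 1}. -/
/-!
Write `u, v` for the images of `X 0, X 1`, so that `u * v = ξ`. Every monomial reduces to a
multiple of a single basis element: `u ^ a * v ^ b = ξ ^ min a b • u ^ (a - b)` or
`ξ ^ min a b • v ^ (b - a)`, so the proposed basis spans. For independence, the `A`-linear map
`A[u, v] → (ℤ →₀ A)` sending `u ^ a * v ^ b` to `ξ ^ min a b • single (a - b) 1` turns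
multiplication by `u * v` into multiplication by `ξ`, hence kills the ideal `(u * v - ξ)`,
and it sends `u ^ i` and `v ^ j` to `single i 1` and `single (-j) 1`.
-/

open MvPolynomial

namespace UVQuotient

def signedPow {S : Type*} [Monoid S] (u v : S) (n : ℤ) : S := u ^ n.toNat * v ^ (-n).toNat

section signedPow

variable {S : Type*} [Monoid S] (u v : S)

@[simp] lemma signedPow_natCast (n : ℕ) : signedPow u v n = u ^ n := by
  simp [signedPow]

@[simp] lemma signedPow_neg_natCast (n : ℕ) : signedPow u v (-n) = v ^ n := by
  simp [signedPow]

lemma map_signedPow {T F : Type*} [Monoid T] [FunLike F S T] [MonoidHomClass F S T] (f : F)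
    (n : ℤ) : f (signedPow u v n) = signedPow (f u) (f v) n := by
  simp [signedPow]

end signedPow

lemma pow_mul_pow_eq_smul_signedPow {A S : Type*} [CommSemiring A] [CommSemiring S]
    [Algebra A S] {ξ : A} {u v : S} (huv : u * v = algebraMap A S ξ) (a b : ℕ) :
    u ^ a * v ^ b = ξ ^ min a b • signedPow u v (a - b) := by
  obtain ⟨a', ha⟩ : ∃ a', a = min a b + a' := ⟨a - min a b, by omega⟩
  obtain ⟨b', hb⟩ : ∃ b', b = min a b + b' := ⟨b - min a b, by omega⟩
  have ha' : ((a : ℤ) - b).toNat = a' := by omega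
  have hb' : (-((a : ℤ) - b)).toNat = b' := by omega
  calc u ^ a * v ^ b = u ^ (min a b + a') * v ^ (min a b + b') := by rw [← ha, ← hb]
    _ = (u * v) ^ min a b * (u ^ a' * v ^ b') := by ring
    _ = ξ ^ min a b • signedPow u v (a - b) := by
      rw [signedPow, ha', hb', huv, ← map_pow, ← Algebra.smul_def]

section CommSemiring

variable {A : Type*} [CommSemiring A] (ξ : A)

lemma monomial_eq_smul_X_pow_mul_X_pow (m : Fin 2 →₀ ℕ) (a : A) :
    monomial m a = a • (X 0 ^ m 0 * X 1 ^ m 1) := by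
  rw [monomial_eq, Finsupp.prod_fintype _ _ (by simp), Fin.prod_univ_two, C_mul']

noncomputable def uvCoeffs : MvPolynomial (Fin 2) A →ₗ[A] ℤ →₀ A :=
  (basisMonomials (Fin 2) A).constr A fun m =>
    Finsupp.single ((m 0 : ℤ) - m 1) (ξ ^ min (m 0) (m 1))

lemma uvCoeffs_monomial (m : Fin 2 →₀ ℕ) (a : A) :
    uvCoeffs ξ (monomial m a) = Finsupp.single ((m 0 : ℤ) - m 1) (a * ξ ^ min (m 0) (m 1)) := by
  have hm : monomial m a = a • basisMonomials (Fin 2) A m := by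
    rw [coe_basisMonomials, smul_monomial, smul_eq_mul, mul_one]
  rw [hm, map_smul, uvCoeffs, Module.Basis.constr_basis, Finsupp.smul_single, smul_eq_mul]

lemma uvCoeffs_mul_X_mul_X (p : MvPolynomial (Fin 2) A) :
    uvCoeffs ξ (p * (X 0 * X 1)) = ξ • uvCoeffs ξ p := by
  induction p using MvPolynomial.induction_on' with
  | monomial m a =>
    rw [X, X, monomial_mul, monomial_mul, mul_one, mul_one, uvCoeffs_monomial,
      uvCoeffs_monomial, Finsupp.smul_single]
    congr 1
    · simp
    · simp [pow_succ]
      ring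
  | add p q hp hq => rw [add_mul, map_add, map_add, hp, hq, smul_add]

lemma uvCoeffs_signedPow (n : ℤ) :
    uvCoeffs ξ (signedPow (X 0) (X 1) n) = Finsupp.single n 1 := by
  rw [signedPow, X_pow_eq_monomial, X_pow_eq_monomial, monomial_mul, uvCoeffs_monomial]
  have hmin : min n.toNat (-n).toNat = 0 := by omega
  simp [hmin]

lemma uvCoeffs_linearCombination_signedPow (x : ℤ →₀ A) :
    uvCoeffs ξ (Finsupp.linearCombination A (signedPow (X 0) (X 1)) x) = x := by
  induction x using Finsupp.induction_linear with
  | zero => simp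
  | add x y hx hy => rw [map_add, map_add, hx, hy]
  | single n a =>
    rw [Finsupp.linearCombination_single, map_smul, uvCoeffs_signedPow, Finsupp.smul_single_one]

end CommSemiring

variable {A : Type*} [CommRing A] (ξ : A)

noncomputable abbrev uvIdeal : Ideal (MvPolynomial (Fin 2) A) := Ideal.span {X 0 * X 1 - C ξ}

abbrev UVRing : Type _ := MvPolynomial (Fin 2) A ⧸ uvIdeal ξ

lemma uvCoeffs_eq_zero_of_mem {p : MvPolynomial (Fin 2) A} (hp : p ∈ uvIdeal ξ) :
    uvCoeffs ξ p = 0 := by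
  obtain ⟨q, rfl⟩ := Ideal.mem_span_singleton'.mp hp
  rw [mul_sub, map_sub, uvCoeffs_mul_X_mul_X, mul_comm, C_mul', map_smul, sub_self]

lemma mk_X_mul_mk_X : Ideal.Quotient.mk (uvIdeal ξ) (X 0) * Ideal.Quotient.mk _ (X 1) =
    algebraMap A (UVRing ξ) ξ := by
  rw [← map_mul, ← Ideal.Quotient.mk_algebraMap, algebraMap_eq, Ideal.Quotient.eq]
  exact Ideal.subset_span rfl

noncomputable def uvLinearCombination : (ℤ →₀ A) →ₗ[A] UVRing ξ :=
  Finsupp.linearCombination A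
    (signedPow (Ideal.Quotient.mk _ (X 0)) (Ideal.Quotient.mk _ (X 1)))

lemma uvLinearCombination_eq_mk (x : ℤ →₀ A) :
    uvLinearCombination ξ x =
      Ideal.Quotient.mk _ (Finsupp.linearCombination A (signedPow (X 0) (X 1)) x) := by
  rw [← Ideal.Quotient.mkₐ_eq_mk A, ← AlgHom.toLinearMap_apply, Finsupp.apply_linearCombination]
  simp [uvLinearCombination, Function.comp_def, map_signedPow]

lemma uvLinearCombination_injective : Function.Injective (uvLinearCombination ξ) := by
  rw [← LinearMap.ker_eq_bot, LinearMap.ker_eq_bot']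
  intro x hx
  rw [uvLinearCombination_eq_mk, Ideal.Quotient.eq_zero_iff_mem] at hx
  rw [← uvCoeffs_linearCombination_signedPow ξ x, uvCoeffs_eq_zero_of_mem ξ hx]

lemma uvLinearCombination_surjective : Function.Surjective (uvLinearCombination ξ) := by
  intro r
  obtain ⟨p, rfl⟩ := Ideal.Quotient.mkₐ_surjective A (uvIdeal ξ) r
  induction p using MvPolynomial.induction_on' with
  | monomial m a =>
    rw [monomial_eq_smul_X_pow_mul_X_pow, map_smul, map_mul, map_pow, map_pow,
      Ideal.Quotient.mkₐ_eq_mk, pow_mul_pow_eq_smul_signedPow (mk_X_mul_mk_X ξ), smul_smul]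
    exact ⟨_, Finsupp.linearCombination_single _ _ _⟩
  | add p q hp hq =>
    obtain ⟨x, hx⟩ := hp
    obtain ⟨y, hy⟩ := hq
    exact ⟨x + y, by rw [map_add, hx, hy, map_add]⟩

noncomputable def uvBasis : Module.Basis ℤ A (UVRing ξ) :=
  .ofRepr (LinearEquiv.ofBijective (uvLinearCombination ξ)
    ⟨uvLinearCombination_injective ξ, uvLinearCombination_surjective ξ⟩).symm

lemma uvBasis_apply (n : ℤ) :
    uvBasis ξ n = signedPow (Ideal.Quotient.mk _ (X 0)) (Ideal.Quotient.mk _ (X 1)) n := by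
  rw [uvBasis, Module.Basis.coe_ofRepr, LinearEquiv.symm_symm]
  simp [uvLinearCombination]

end UVQuotient

/-- `R = A[u,v]/(uv - ξ)` is free as an `A`-module with basis
`{1} ∪ {u^i : i ≥ 1} ∪ {v^j : j ≥ 1}` (indexed here by `ℤ`: nonnegative `i` gives `u^i`,
nonpositive `-j` gives `v^j`, both giving `1` at `0`). -/
theorem basis_of_uv_ring (A : Type) [CommRing A] (ξ : A) :
    ∃ (B : Module.Basis ℤ A (MvPolynomial (Fin 2) A ⧸
        Ideal.span {(X 0 : MvPolynomial (Fin 2) A) * X 1 - C ξ})),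
      (∀ i : ℕ, B (i : ℤ) = (Ideal.Quotient.mk _ (X 0)) ^ i) ∧
      (∀ j : ℕ, B (-(j : ℤ)) = (Ideal.Quotient.mk _ (X 1)) ^ j) := by
  refine ⟨UVQuotient.uvBasis ξ, fun i => ?_, fun j => ?_⟩ <;>
    simp [UVQuotient.uvBasis_apply]
end

section
/- Let A be a commutative ring and ξ ∈ A a nonzerodivisor. Then the images of u and v in R = A[u,v]/(uv - ξ) are nonzerodivisors in R. -/
/-!
If `x` is regular and `d` is a nonzerodivisor modulo `x`, then `x` is a nonzerodivisor modulo `d`: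
from `x f = d g` we get `x ∣ g`, say `g = x k`, and cancelling `x` gives `f = d k`.
Modulo `u` (or `v`), `uv - ξ` is `-ξ`, a nonzerodivisor on `A[u,v]/(u) ≅ A[v]` because `ξ` is one on `A`.
-/

open MvPolynomial nonZeroDivisors

theorem dvd_of_dvd_mul_of_isLeftRegular {S : Type*} [CommMonoid S] {x d f : S}
    (hx : IsLeftRegular x) (hd : ∀ g, x ∣ d * g → x ∣ g) (h : d ∣ x * f) : d ∣ f := by
  obtain ⟨g, hg⟩ := h
  obtain ⟨k, rfl⟩ := hd g ⟨f, hg.symm⟩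
  exact ⟨k, hx (show x * f = x * (d * k) by rw [hg, mul_left_comm])⟩

theorem Ideal.Quotient.mk_mem_nonZeroDivisors_of_dvd_mul_imp_dvd {S : Type*} [CommRing S]
    {x d : S} (hx : IsLeftRegular x) (hd : ∀ g, x ∣ d * g → x ∣ g) :
    Ideal.Quotient.mk (Ideal.span {d}) x ∈ (S ⧸ Ideal.span {d})⁰ := by
  rw [mem_nonZeroDivisors_iff_right]
  intro y hy
  obtain ⟨f, rfl⟩ := Ideal.Quotient.mk_surjective y
  rw [← map_mul, Ideal.Quotient.eq_zero_iff_mem, Ideal.mem_span_singleton, mul_comm] at hy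
  rw [Ideal.Quotient.eq_zero_iff_mem, Ideal.mem_span_singleton]
  exact dvd_of_dvd_mul_of_isLeftRegular hx hd hy

namespace MvPolynomial

variable {R σ : Type*} [CommRing R]

theorem X_dvd_iff_forall_coeff_eq_zero {i : σ} {p : MvPolynomial σ R} :
    X i ∣ p ↔ ∀ m : σ →₀ ℕ, m i = 0 → coeff m p = 0 := by
  rw [X_dvd_iff_modMonomial_eq_zero, MvPolynomial.ext_iff]
  refine forall_congr' fun m => ?_
  by_cases hm : m i = 0
  · rw [coeff_modMonomial_of_not_le _ (by simp [Finsupp.single_le_iff, hm])]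
    simp [hm]
  · rw [coeff_modMonomial_of_le _ (by simpa [Finsupp.single_le_iff, Nat.one_le_iff_ne_zero])]
    simp [hm]

theorem X_dvd_of_dvd_C_mul {i : σ} {a : R} (ha : a ∈ R⁰) {p : MvPolynomial σ R}
    (h : X i ∣ C a * p) : X i ∣ p := by
  rw [X_dvd_iff_forall_coeff_eq_zero] at h ⊢
  intro m hm
  exact (mem_nonZeroDivisors_iff_right.mp ha) _ (by rw [mul_comm, ← coeff_C_mul]; exact h m hm)

end MvPolynomial

/-- if `ξ ∈ A` is a nonzerodivisor, then the images of `u` and `v` in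
`R = A[u,v]/(uv - ξ)` are nonzerodivisors in `R`. -/
theorem uv_nonzerodivisors (A : Type) [CommRing A] (ξ : A) (hξ : ξ ∈ nonZeroDivisors A) :
    (Ideal.Quotient.mk (Ideal.span {(X 0 : MvPolynomial (Fin 2) A) * X 1 - C ξ}) (X 0))
      ∈ nonZeroDivisors (MvPolynomial (Fin 2) A ⧸
        Ideal.span {(X 0 : MvPolynomial (Fin 2) A) * X 1 - C ξ}) ∧
    (Ideal.Quotient.mk (Ideal.span {(X 0 : MvPolynomial (Fin 2) A) * X 1 - C ξ}) (X 1))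
      ∈ nonZeroDivisors (MvPolynomial (Fin 2) A ⧸
        Ideal.span {(X 0 : MvPolynomial (Fin 2) A) * X 1 - C ξ}) := by
  have hX_dvd_uv : ∀ i : Fin 2, X i ∣ (X 0 * X 1 : MvPolynomial (Fin 2) A) := by
    intro i
    fin_cases i
    exacts [dvd_mul_right _ _, dvd_mul_left _ _]
  have hd : ∀ (i : Fin 2) (g : MvPolynomial (Fin 2) A), X i ∣ (X 0 * X 1 - C ξ) * g → X i ∣ g := by
    intro i g h
    rw [sub_mul, dvd_sub_right (dvd_mul_of_dvd_left (hX_dvd_uv i) g)] at h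
    exact X_dvd_of_dvd_C_mul hξ h
  exact ⟨Ideal.Quotient.mk_mem_nonZeroDivisors_of_dvd_mul_imp_dvd isRegular_X.left (hd 0 ·),
    Ideal.Quotient.mk_mem_nonZeroDivisors_of_dvd_mul_imp_dvd isRegular_X.left (hd 1 ·)⟩
end

section
/- Let A be a commutative ring and ξ ∈ A a nonzerodivisor. The A-algebra homomorphism A[u,v]/(uv - ξ) → A[σ, σ^{-1}] determined by u ↦ ξσ and v ↦ σ^{-1} is well-defined and injective. -/
/-!
Modulo `uv - ξ` every polynomial is congruent to a normal form `∑ₖ cₖ wₖ` with `wₖ = uᵏ` for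
`k ≥ 0` and `wₖ = v⁻ᵏ` for `k < 0`, because `uᵃ vᵇ ≡ ξ^min(a,b) w_{a-b}`. The map sends `wₖ` to
`ξ^max(k,0) σᵏ`, so the image of a normal form has `k`-th coefficient `ξ^max(k,0) cₖ`; as `ξ` is a
nonzerodivisor, this vanishes only when every `cₖ` does.
-/

open MvPolynomial

namespace MapToLaurent

variable {A : Type*} [CommRing A] (ξ : A)

noncomputable abbrev uvIdeal : Ideal (MvPolynomial (Fin 2) A) :=
  Ideal.span {X 0 * X 1 - C ξ}

noncomputable def laurentEval : MvPolynomial (Fin 2) A →ₐ[A] LaurentPolynomial A :=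
  aeval ![LaurentPolynomial.C ξ * LaurentPolynomial.T 1, LaurentPolynomial.T (-1)]

@[simp]
lemma laurentEval_X_zero :
    laurentEval ξ (X 0) = LaurentPolynomial.C ξ * LaurentPolynomial.T 1 := by
  simp [laurentEval]

@[simp]
lemma laurentEval_X_one : laurentEval ξ (X 1) = LaurentPolynomial.T (-1) := by
  simp [laurentEval]

@[simp]
lemma laurentEval_C (a : A) : laurentEval ξ (C a) = LaurentPolynomial.C a :=
  (laurentEval ξ).commutes a

lemma laurentEval_eq_zero_of_mem_uvIdeal {F : MvPolynomial (Fin 2) A} (hF : F ∈ uvIdeal ξ) :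
    laurentEval ξ F = 0 := by
  refine (Ideal.span_le (I := RingHom.ker (laurentEval ξ))).mpr ?_ hF
  rw [Set.singleton_subset_iff, SetLike.mem_coe, RingHom.mem_ker, map_sub, map_mul,
    laurentEval_X_zero, laurentEval_X_one, laurentEval_C, mul_assoc, ← LaurentPolynomial.T_add,
    add_neg_cancel, LaurentPolynomial.T_zero, mul_one, sub_self]

noncomputable def toLaurent : MvPolynomial (Fin 2) A ⧸ uvIdeal ξ →ₐ[A] LaurentPolynomial A :=
  Ideal.Quotient.liftₐ _ (laurentEval ξ) fun _ => laurentEval_eq_zero_of_mem_uvIdeal ξ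

@[simp]
lemma toLaurent_mk (F : MvPolynomial (Fin 2) A) :
    toLaurent ξ (Ideal.Quotient.mk _ F) = laurentEval ξ F :=
  rfl

/-- `u ^ k` for `k ≥ 0` and `v ^ (-k)` for `k < 0`, as `Int.toNat` truncates at `0`. -/
noncomputable def normalMonomial (k : ℤ) : MvPolynomial (Fin 2) A :=
  X 0 ^ k.toNat * X 1 ^ (-k).toNat

noncomputable def normalForm : (ℤ →₀ A) →ₗ[A] MvPolynomial (Fin 2) A :=
  Finsupp.linearCombination A normalMonomial

lemma laurentEval_normalMonomial (k : ℤ) :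
    laurentEval ξ (normalMonomial k) =
      LaurentPolynomial.C (ξ ^ k.toNat) * LaurentPolynomial.T k := by
  simp only [normalMonomial, map_mul, map_pow, laurentEval_X_zero, laurentEval_X_one, mul_pow,
    LaurentPolynomial.T_pow, mul_assoc, ← LaurentPolynomial.T_add]
  congr 2
  omega

lemma coeff_laurentEval_normalForm (G : ℤ →₀ A) (k : ℤ) :
    (laurentEval ξ (normalForm G)).coeff k = ξ ^ k.toNat * G k := by
  induction G using Finsupp.induction_linear with
  | zero => simp
  | add G₁ G₂ h₁ h₂ => simp [AddMonoidAlgebra.coeff_add, h₁, h₂, mul_add]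
  | single j c =>
    rw [normalForm, Finsupp.linearCombination_single, map_smul, laurentEval_normalMonomial,
      ← LaurentPolynomial.single_eq_C_mul_T, AddMonoidAlgebra.smul_single', AddMonoidAlgebra.coeff_single, Finsupp.single_apply,
      Finsupp.single_apply]
    split_ifs with hjk
    · rw [hjk, mul_comm]
    · rw [mul_zero]

lemma mk_X_zero_pow_add_mul_X_one_pow_add (a b m : ℕ) :
    Ideal.Quotient.mk (uvIdeal ξ) (X 0 ^ (a + m) * X 1 ^ (b + m)) =
      Ideal.Quotient.mk (uvIdeal ξ) (C (ξ ^ m) * (X 0 ^ a * X 1 ^ b)) := by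
  have hrel : Ideal.Quotient.mk (uvIdeal ξ) (X 0 * X 1) = Ideal.Quotient.mk (uvIdeal ξ) (C ξ) :=
    Ideal.Quotient.eq.mpr (Ideal.subset_span rfl)
  rw [show (X 0 ^ (a + m) * X 1 ^ (b + m) : MvPolynomial (Fin 2) A) =
    (X 0 * X 1) ^ m * (X 0 ^ a * X 1 ^ b) by ring, map_mul, map_pow, hrel]
  simp only [map_mul, map_pow]

lemma mk_X_zero_pow_mul_X_one_pow (a b : ℕ) :
    Ideal.Quotient.mk (uvIdeal ξ) (X 0 ^ a * X 1 ^ b) =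
      Ideal.Quotient.mk (uvIdeal ξ) (C (ξ ^ min a b) * normalMonomial ((a : ℤ) - b)) := by
  have ha : a = ((a : ℤ) - b).toNat + min a b := by omega
  have hb : b = (-((a : ℤ) - b)).toNat + min a b := by omega
  have h := mk_X_zero_pow_add_mul_X_one_pow_add ξ
    ((a : ℤ) - b).toNat (-((a : ℤ) - b)).toNat (min a b)
  rwa [← ha, ← hb] at h

lemma mk_normalForm_surjective :
    Function.Surjective fun G => Ideal.Quotient.mk (uvIdeal ξ) (normalForm G) := by
  intro x
  obtain ⟨F, rfl⟩ := Ideal.Quotient.mk_surjective x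
  induction F using MvPolynomial.induction_on' with
  | monomial d c =>
    refine ⟨Finsupp.single ((d 0 : ℤ) - d 1) (c * ξ ^ min (d 0) (d 1)), ?_⟩
    have hd : monomial d c = C c * (X 0 ^ d 0 * X 1 ^ d 1) := by
      rw [monomial_eq, Finsupp.prod_fintype _ _ (fun i => pow_zero _), Fin.prod_univ_two]
    rw [hd, map_mul, mk_X_zero_pow_mul_X_one_pow, ← map_mul, ← mul_assoc, ← map_mul]
    simp only [normalForm, Finsupp.linearCombination_single, smul_eq_C_mul]
  | add p q hp hq =>
    obtain ⟨G₁, hG₁⟩ := hp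
    obtain ⟨G₂, hG₂⟩ := hq
    exact ⟨G₁ + G₂, by simp [hG₁, hG₂]⟩

lemma toLaurent_injective (hξ : ξ ∈ nonZeroDivisors A) : Function.Injective (toLaurent ξ) := by
  refine (injective_iff_map_eq_zero _).mpr fun x hx => ?_
  obtain ⟨G, rfl⟩ := mk_normalForm_surjective ξ x
  have hG : G = 0 := by
    ext k
    have hk := coeff_laurentEval_normalForm ξ G k
    rw [← toLaurent_mk, hx] at hk
    exact (mem_nonZeroDivisors_iff_left.mp (pow_mem hξ _)) _ hk.symm
  simp [hG]

end MapToLaurent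

open MapToLaurent in
/-- for a nonzerodivisor `ξ ∈ A`, the `A`-algebra homomorphism
`A[u,v]/(uv - ξ) → A[σ,σ⁻¹]` with `u ↦ ξσ`, `v ↦ σ⁻¹` is well-defined and injective. -/
theorem map_to_laurent_injective (A : Type) [CommRing A] (ξ : A)
    (hξ : ξ ∈ nonZeroDivisors A) :
    ∃ f : (MvPolynomial (Fin 2) A ⧸
        Ideal.span {(X 0 : MvPolynomial (Fin 2) A) * X 1 - C ξ}) →+* LaurentPolynomial A,
      (∀ a : A, f (Ideal.Quotient.mk _ (C a)) = LaurentPolynomial.C a) ∧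
      f (Ideal.Quotient.mk _ (X 0)) = LaurentPolynomial.C ξ * LaurentPolynomial.T 1 ∧
      f (Ideal.Quotient.mk _ (X 1)) = LaurentPolynomial.T (-1) ∧
      Function.Injective f :=
  ⟨toLaurent ξ, by simp, by simp, by simp, toLaurent_injective ξ hξ⟩
end
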